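/- arXiv:2412.00980 — 4 statements merged into one kernel-verified Lean document; each statement's English description precedes it below -/
import Mathlib

section
/- Let E be a real inner product space, let N be a positive integer, let γ, m, H ≥ 0, let u, g ∈ E, let a, ā be reals, and let a_1, …, a_N be nonnegative reals with A = a_1 + ⋯ + a_N. Suppose d_1, …, d_N ∈ E satisfy ⟨u, d_j⟩ ≥ m‖u‖² and ‖d_j‖ ≤ H‖u‖ for every j. Then ‖(γ(ā − a)/N) g + u − (γ/N) ∑_{j=1}^N a_j d_j‖² ≤ 2(1 − 2γmA/N + γ²A²H²/N²) ‖u‖² + (2γ²/N²)(a − ā)² ‖g‖². -/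
open scoped RealInnerProductSpace BigOperators

/-- Noiseless form of the per-turn bound on trajectory difference (Claim A.1). -/
theorem per_turn_trajectory_difference_noiseless
    {E : Type*} [NormedAddCommGroup E] [InnerProductSpace ℝ E]
    (N : ℕ) (hN : 0 < N) (γ m H : ℝ) (hγ : 0 ≤ γ) (hm : 0 ≤ m) (hH : 0 ≤ H)
    (u g : E) (aDev aBarDev : ℝ)
    (a : Fin N → ℝ) (ha : ∀ j, 0 ≤ a j)
    (A : ℝ) (hA : A = ∑ j, a j)
    (d : Fin N → E)
    (hconv : ∀ j, ⟪u, d j⟫ ≥ m * ‖u‖ ^ 2)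
    (hsmooth : ∀ j, ‖d j‖ ≤ H * ‖u‖) :
    ‖(γ * (aBarDev - aDev) / N) • g + u - (γ / N) • ∑ j, a j • d j‖ ^ 2 ≤
      2 * (1 - 2 * γ * m * A / N + γ ^ 2 * A ^ 2 * H ^ 2 / N ^ 2) * ‖u‖ ^ 2
        + (2 * γ ^ 2 / N ^ 2) * (aDev - aBarDev) ^ 2 * ‖g‖ ^ 2 := by
  have hNpos : (0:ℝ) < N := by exact_mod_cast hN
  have hA0 : 0 ≤ A := by
    rw [hA]; exact Finset.sum_nonneg fun j _ => ha j
  set v : E := ∑ j, a j • d j with hv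
  have hinner : A * (m * ‖u‖ ^ 2) ≤ ⟪u, v⟫ := by
    rw [hv, inner_sum, hA, Finset.sum_mul]
    apply Finset.sum_le_sum
    intro j _
    rw [real_inner_smul_right]
    exact mul_le_mul_of_nonneg_left (hconv j) (ha j)
  have hnormv : ‖v‖ ≤ A * (H * ‖u‖) := by
    calc ‖v‖ ≤ ∑ j, ‖a j • d j‖ := norm_sum_le _ _
    _ ≤ ∑ j, a j * (H * ‖u‖) := by
        apply Finset.sum_le_sum
        intro j _
        rw [norm_smul, Real.norm_eq_abs, abs_of_nonneg (ha j)]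
        exact mul_le_mul_of_nonneg_left (hsmooth j) (ha j)
    _ = A * (H * ‖u‖) := by rw [hA, Finset.sum_mul]
  set x : E := (γ * (aBarDev - aDev) / N) • g with hx
  set y : E := u - (γ / N) • v with hy
  have hxy : x + u - (γ / N) • v = x + y := by rw [hy]; abel
  rw [hxy]
  have h1 : ‖x + y‖ ≤ ‖x‖ + ‖y‖ := norm_add_le _ _
  have h2 : ‖x + y‖ ^ 2 ≤ 2 * ‖x‖ ^ 2 + 2 * ‖y‖ ^ 2 := by
    nlinarith [norm_nonneg (x + y), norm_nonneg x, norm_nonneg y, sq_nonneg (‖x‖ - ‖y‖)]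
  have hxsq : ‖x‖ ^ 2 = (γ * (aBarDev - aDev) / N) ^ 2 * ‖g‖ ^ 2 := by
    rw [hx, norm_smul, Real.norm_eq_abs, mul_pow, sq_abs]
  have hysq : ‖y‖ ^ 2 = ‖u‖ ^ 2 - 2 * ((γ / N) * ⟪u, v⟫) + (γ / N) ^ 2 * ‖v‖ ^ 2 := by
    rw [hy, @norm_sub_sq_real, real_inner_smul_right, norm_smul, Real.norm_eq_abs,
      abs_of_nonneg (by positivity : (0:ℝ) ≤ γ / N), mul_pow]
  have hγN : 0 ≤ γ / N := by positivity
  have hvsq : ‖v‖ ^ 2 ≤ (A * (H * ‖u‖)) ^ 2 := by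
    have := norm_nonneg v
    nlinarith
  have hybound : ‖y‖ ^ 2 ≤ (1 - 2 * γ * m * A / N + γ ^ 2 * A ^ 2 * H ^ 2 / N ^ 2) * ‖u‖ ^ 2 := by
    rw [hysq]
    have h3 := mul_le_mul_of_nonneg_left hinner hγN
    have h4 := mul_le_mul_of_nonneg_left hvsq (sq_nonneg (γ / N))
    have heq : (1 - 2 * γ * m * A / N + γ ^ 2 * A ^ 2 * H ^ 2 / N ^ 2) * ‖u‖ ^ 2
        = ‖u‖ ^ 2 - 2 * ((γ / N) * (A * (m * ‖u‖ ^ 2))) + (γ / N) ^ 2 * (A * (H * ‖u‖)) ^ 2 := by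
      rw [div_pow]; field_simp
    rw [heq]
    linarith
  calc ‖x + y‖ ^ 2 ≤ 2 * ‖x‖ ^ 2 + 2 * ‖y‖ ^ 2 := h2
  _ ≤ 2 * (1 - 2 * γ * m * A / N + γ ^ 2 * A ^ 2 * H ^ 2 / N ^ 2) * ‖u‖ ^ 2
        + (2 * γ ^ 2 / N ^ 2) * (aDev - aBarDev) ^ 2 * ‖g‖ ^ 2 := by
    rw [hxsq]
    have hc : 2 * ((γ * (aBarDev - aDev) / N) ^ 2 * ‖g‖ ^ 2)
        = (2 * γ ^ 2 / N ^ 2) * (aDev - aBarDev) ^ 2 * ‖g‖ ^ 2 := by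
      field_simp; ring
    linarith [hybound, hc]
end

section
/- Let E be a real inner product space, N and T positive integers, m, H ≥ 0, and γ_1, …, γ_T ≥ 0. Fix a client index i ∈ {1, …, N}. Let g_1, …, g_N : E → E be maps such that for every j and all x, y ∈ E, ⟨x − y, g_j(x) − g_j(y)⟩ ≥ m‖x − y‖² and ‖g_j(x) − g_j(y)‖ ≤ H‖x − y‖. Let ā_1, …, ā_T be reals. Define two sequences θ, θ' : {1, …, T+1} → E by θ_1 = θ'_1, θ_{t+1} = θ_t − (γ_t/N) ∑_{j=1}^N g_j(θ_t), and θ'_{t+1} = θ'_t − (γ_t/N) ( ā_t g_i(θ'_t) + ∑_{j ≠ i} g_j(θ'_t) ). Then ‖θ_{T+1} − θ'_{T+1}‖² ≤ (2/N²) ∑_{t=1}^{T} γ_t² C_t (ā_t − 1)² ‖g_i(θ'_t)‖², where C_t = ∏_{l=t+1}^{T} c_l and c_l = 2(1 − 2γ_l m + γ_l² H²), provided c_l ≥ 0 for all l. -/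
open scoped RealInnerProductSpace BigOperators

lemma key_step {E : Type*} [NormedAddCommGroup E] [InnerProductSpace ℝ E]
    (d S b : E) (γ m H Nr : ℝ) (hN : 0 < Nr) (hγ : 0 ≤ γ)
    (hS1 : Nr * m * ‖d‖ ^ 2 ≤ ⟪d, S⟫)
    (hS2 : ‖S‖ ≤ Nr * H * ‖d‖) :
    ‖d - (γ / Nr) • S + b‖ ^ 2 ≤
      2 * (1 - 2 * γ * m + γ ^ 2 * H ^ 2) * ‖d‖ ^ 2 + 2 * ‖b‖ ^ 2 := by
  have hcn : 0 ≤ γ / Nr := div_nonneg hγ hN.le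
  have h1 : ‖d - (γ / Nr) • S‖ ^ 2
      = ‖d‖ ^ 2 - 2 * ((γ / Nr) * ⟪d, S⟫) + (γ / Nr) ^ 2 * ‖S‖ ^ 2 := by
    rw [norm_sub_sq_real, real_inner_smul_right, norm_smul, Real.norm_eq_abs,
      mul_pow, sq_abs]
  have h2 : ‖d - (γ / Nr) • S‖ ^ 2 ≤ (1 - 2 * γ * m + γ ^ 2 * H ^ 2) * ‖d‖ ^ 2 := by
    rw [h1]
    have ha : γ * m * ‖d‖ ^ 2 ≤ (γ / Nr) * ⟪d, S⟫ := by
      have := mul_le_mul_of_nonneg_left hS1 hcn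
      calc γ * m * ‖d‖ ^ 2 = (γ / Nr) * (Nr * m * ‖d‖ ^ 2) := by field_simp
        _ ≤ (γ / Nr) * ⟪d, S⟫ := this
    have hb : (γ / Nr) ^ 2 * ‖S‖ ^ 2 ≤ γ ^ 2 * H ^ 2 * ‖d‖ ^ 2 := by
      have hsq : ‖S‖ ^ 2 ≤ (Nr * H * ‖d‖) ^ 2 := by
        nlinarith [norm_nonneg S]
      have := mul_le_mul_of_nonneg_left hsq (sq_nonneg (γ / Nr))
      calc (γ / Nr) ^ 2 * ‖S‖ ^ 2 ≤ (γ / Nr) ^ 2 * (Nr * H * ‖d‖) ^ 2 := this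
        _ = γ ^ 2 * H ^ 2 * ‖d‖ ^ 2 := by field_simp
    nlinarith
  have h3 : ‖d - (γ / Nr) • S + b‖ ≤ ‖d - (γ / Nr) • S‖ + ‖b‖ := norm_add_le _ _
  nlinarith [norm_nonneg (d - (γ / Nr) • S + b), norm_nonneg (d - (γ / Nr) • S),
    norm_nonneg b, sq_nonneg (‖d - (γ / Nr) • S‖ - ‖b‖)]

/-- Noiseless (deterministic-gradient) form of Corollary A.2: bound on the
difference at time `T + 1` between the truthful trajectory and the trajectory
where client `i` rescales its reported gradient. -/
theorem trajectory_difference_bound_noiseless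
    {E : Type*} [NormedAddCommGroup E] [InnerProductSpace ℝ E]
    (N T : ℕ) (hN : 0 < N) (hT : 0 < T)
    (m H : ℝ) (hm : 0 ≤ m) (hH : 0 ≤ H)
    (γ : ℕ → ℝ) (hγ : ∀ t ∈ Finset.Icc 1 T, 0 ≤ γ t)
    (i : Fin N) (g : Fin N → E → E)
    (hconv : ∀ j : Fin N, ∀ x y : E, ⟪x - y, g j x - g j y⟫ ≥ m * ‖x - y‖ ^ 2)
    (hsmooth : ∀ j : Fin N, ∀ x y : E, ‖g j x - g j y‖ ≤ H * ‖x - y‖)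
    (aBar : ℕ → ℝ)
    (θ θ' : ℕ → E) (hinit : θ 1 = θ' 1)
    (hθ : ∀ t ∈ Finset.Icc 1 T,
      θ (t + 1) = θ t - (γ t / N) • ∑ j, g j (θ t))
    (hθ' : ∀ t ∈ Finset.Icc 1 T,
      θ' (t + 1) = θ' t - (γ t / N) •
        (aBar t • g i (θ' t) + ∑ j ∈ Finset.univ.erase i, g j (θ' t)))
    (hc : ∀ l ∈ Finset.Icc 1 T, 0 ≤ 2 * (1 - 2 * γ l * m + γ l ^ 2 * H ^ 2)) :
    ‖θ (T + 1) - θ' (T + 1)‖ ^ 2 ≤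
      (2 / (N : ℝ) ^ 2) * ∑ t ∈ Finset.Icc 1 T,
        γ t ^ 2 * (∏ l ∈ Finset.Icc (t + 1) T, 2 * (1 - 2 * γ l * m + γ l ^ 2 * H ^ 2))
          * (aBar t - 1) ^ 2 * ‖g i (θ' t)‖ ^ 2 := by
  set c : ℕ → ℝ := fun l => 2 * (1 - 2 * γ l * m + γ l ^ 2 * H ^ 2) with hcdef
  have hNr : (0 : ℝ) < (N : ℝ) := by exact_mod_cast hN
  have main : ∀ s, s ≤ T →
      ‖θ (s + 1) - θ' (s + 1)‖ ^ 2 ≤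
        (2 / (N : ℝ) ^ 2) * ∑ t ∈ Finset.Icc 1 s,
          γ t ^ 2 * (∏ l ∈ Finset.Icc (t + 1) s, c l)
            * (aBar t - 1) ^ 2 * ‖g i (θ' t)‖ ^ 2 := by
    intro s
    induction s with
    | zero => intro _; simp [hinit]
    | succ s ih =>
      intro hs
      have hsT : s ≤ T := Nat.le_of_succ_le hs
      have ih' := ih hsT
      have ht : s + 1 ∈ Finset.Icc 1 T := by
        simp [Finset.mem_Icc]; omega
      set x := θ (s + 1) with hx
      set y := θ' (s + 1) with hy
      -- difference recursion
      have hsum : aBar (s+1) • g i y + ∑ j ∈ Finset.univ.erase i, g j y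
          = (∑ j, g j y) + (aBar (s+1) - 1) • g i y := by
        rw [← Finset.add_sum_erase _ (fun j => g j y) (Finset.mem_univ i)]
        module
      have hdiff : θ (s + 2) - θ' (s + 2)
          = (x - y) - (γ (s+1) / N) • ((∑ j, g j x) - (∑ j, g j y))
            + ((γ (s+1) / N) * (aBar (s+1) - 1)) • g i y := by
        rw [hθ _ ht, hθ' _ ht, hsum]
        module
      -- hypotheses for key_step
      have hS1 : (N : ℝ) * m * ‖x - y‖ ^ 2 ≤ ⟪x - y, (∑ j, g j x) - (∑ j, g j y)⟫ := by
        rw [← Finset.sum_sub_distrib, inner_sum]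
        calc (N : ℝ) * m * ‖x - y‖ ^ 2
            = ∑ _j : Fin N, m * ‖x - y‖ ^ 2 := by
              simp [Finset.sum_const, Finset.card_univ]; ring
          _ ≤ ∑ j : Fin N, ⟪x - y, g j x - g j y⟫ :=
              Finset.sum_le_sum (fun j _ => hconv j x y)
      have hS2 : ‖(∑ j, g j x) - (∑ j, g j y)‖ ≤ (N : ℝ) * H * ‖x - y‖ := by
        rw [← Finset.sum_sub_distrib]
        calc ‖∑ j, (g j x - g j y)‖ ≤ ∑ j, ‖g j x - g j y‖ := norm_sum_le _ _
          _ ≤ ∑ _j : Fin N, H * ‖x - y‖ :=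
              Finset.sum_le_sum (fun j _ => hsmooth j x y)
          _ = (N : ℝ) * H * ‖x - y‖ := by
              simp [Finset.sum_const, Finset.card_univ]; ring
      have hkey := key_step (x - y) ((∑ j, g j x) - (∑ j, g j y))
        (((γ (s+1) / N) * (aBar (s+1) - 1)) • g i y)
        (γ (s+1)) m H (N : ℝ) hNr (hγ _ ht) hS1 hS2
      rw [← hdiff] at hkey
      have hbnorm : ‖(((γ (s+1) / N) * (aBar (s+1) - 1)) • g i y)‖ ^ 2
          = (γ (s+1) / N) ^ 2 * (aBar (s+1) - 1) ^ 2 * ‖g i y‖ ^ 2 := by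
        rw [norm_smul, Real.norm_eq_abs, mul_pow, sq_abs]
        ring
      rw [hbnorm] at hkey
      -- rearrange RHS
      rw [Finset.sum_Icc_succ_top (by omega : 1 ≤ s + 1)]
      have hprod : ∀ t ∈ Finset.Icc 1 s,
          γ t ^ 2 * (∏ l ∈ Finset.Icc (t + 1) (s+1), c l)
            * (aBar t - 1) ^ 2 * ‖g i (θ' t)‖ ^ 2
          = c (s+1) * (γ t ^ 2 * (∏ l ∈ Finset.Icc (t + 1) s, c l)
            * (aBar t - 1) ^ 2 * ‖g i (θ' t)‖ ^ 2) := by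
        intro t htm
        rw [Finset.mem_Icc] at htm
        rw [Finset.prod_Icc_succ_top (by omega : t + 1 ≤ s + 1)]
        ring
      rw [Finset.sum_congr rfl hprod, ← Finset.mul_sum,
        show Finset.Icc (s+1+1) (s+1) = ∅ from Finset.Icc_eq_empty (by omega)]
      have hcpos : 0 ≤ c (s+1) := hc _ ht
      have hmul := mul_le_mul_of_nonneg_left ih' hcpos
      calc ‖θ (s + 1 + 1) - θ' (s + 1 + 1)‖ ^ 2
          ≤ c (s+1) * ‖x - y‖ ^ 2
            + 2 * ((γ (s+1) / N) ^ 2 * (aBar (s+1) - 1) ^ 2 * ‖g i y‖ ^ 2) := hkey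
        _ ≤ c (s+1) * ((2 / (N : ℝ) ^ 2) * ∑ t ∈ Finset.Icc 1 s,
              γ t ^ 2 * (∏ l ∈ Finset.Icc (t + 1) s, c l)
                * (aBar t - 1) ^ 2 * ‖g i (θ' t)‖ ^ 2)
            + 2 * ((γ (s+1) / N) ^ 2 * (aBar (s+1) - 1) ^ 2 * ‖g i y‖ ^ 2) := by
              linarith
        _ = (2 / (N : ℝ) ^ 2) * (c (s+1) * ∑ t ∈ Finset.Icc 1 s,
              γ t ^ 2 * (∏ l ∈ Finset.Icc (t + 1) s, c l)
                * (aBar t - 1) ^ 2 * ‖g i (θ' t)‖ ^ 2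
              + γ (s+1) ^ 2 * (∏ l ∈ (∅ : Finset ℕ), c l)
                * (aBar (s+1) - 1) ^ 2 * ‖g i y‖ ^ 2) := by
              field_simp
              ring
  exact main T le_rfl
end

section
/- Let E be a real inner product space, N and T positive integers, m, H, L ≥ 0, and γ_1, …, γ_T ≥ 0. Fix i ∈ {1, …, N}. Let g_1, …, g_N : E → E satisfy, for every j and all x, y ∈ E, ⟨x − y, g_j(x) − g_j(y)⟩ ≥ m‖x − y‖² and ‖g_j(x) − g_j(y)‖ ≤ H‖x − y‖, and let R : E → ℝ be L-Lipschitz. Let ā_1, …, ā_T be reals, and define θ, θ' : {1, …, T+1} → E by θ_1 = θ'_1, θ_{t+1} = θ_t − (γ_t/N) ∑_{j=1}^N g_j(θ_t), and θ'_{t+1} = θ'_t − (γ_t/N)( ā_t g_i(θ'_t) + ∑_{j ≠ i} g_j(θ'_t) ). If c_l = 2(1 − 2γ_l m + γ_l² H²) ≥ 0 for all l and C_t = ∏_{l=t+1}^{T} c_l, then |R(θ_{T+1}) − R(θ'_{T+1})| ≤ (√2 · L / N) ∑_{t=1}^{T} γ_t √(C_t) · |ā_t − 1| · ‖g_i(θ'_t)‖.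 -/
open scoped RealInnerProductSpace BigOperators

lemma sqrt_prod_of_nonneg (s : Finset ℕ) (f : ℕ → ℝ) (hf : ∀ l ∈ s, 0 ≤ f l) :
    Real.sqrt (∏ l ∈ s, f l) = ∏ l ∈ s, Real.sqrt (f l) := by
  induction s using Finset.cons_induction with
  | empty => simp
  | cons a s ha ih =>
    rw [Finset.prod_cons, Finset.prod_cons,
      Real.sqrt_mul (hf a (Finset.mem_cons_self a s)),
      ih (fun l hl => hf l (Finset.mem_cons_of_mem hl))]

set_option maxHeartbeats 1600000 in
/-- Noiseless (deterministic-gradient) form of Claim A.3: the reward difference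
between the truthful trajectory and the trajectory in which client `i` rescales
its reported gradient is bounded by the weighted sum of the deviations. -/
theorem reward_difference_bound_noiseless
    {E : Type*} [NormedAddCommGroup E] [InnerProductSpace ℝ E]
    (N T : ℕ) (hN : 0 < N) (hT : 0 < T)
    (m H L : ℝ) (hm : 0 ≤ m) (hH : 0 ≤ H) (hL : 0 ≤ L)
    (γ : ℕ → ℝ) (hγ : ∀ t ∈ Finset.Icc 1 T, 0 ≤ γ t)
    (i : Fin N) (g : Fin N → E → E)
    (hconv : ∀ j : Fin N, ∀ x y : E, ⟪x - y, g j x - g j y⟫ ≥ m * ‖x - y‖ ^ 2)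
    (hsmooth : ∀ j : Fin N, ∀ x y : E, ‖g j x - g j y‖ ≤ H * ‖x - y‖)
    (R : E → ℝ) (hR : ∀ x y : E, |R x - R y| ≤ L * ‖x - y‖)
    (aBar : ℕ → ℝ)
    (θ θ' : ℕ → E) (hinit : θ 1 = θ' 1)
    (hθ : ∀ t ∈ Finset.Icc 1 T,
      θ (t + 1) = θ t - (γ t / N) • ∑ j, g j (θ t))
    (hθ' : ∀ t ∈ Finset.Icc 1 T,
      θ' (t + 1) = θ' t - (γ t / N) •
        (aBar t • g i (θ' t) + ∑ j ∈ Finset.univ.erase i, g j (θ' t)))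
    (hc : ∀ l ∈ Finset.Icc 1 T, 0 ≤ 2 * (1 - 2 * γ l * m + γ l ^ 2 * H ^ 2)) :
    |R (θ (T + 1)) - R (θ' (T + 1))| ≤
      (Real.sqrt 2 * L / N) * ∑ t ∈ Finset.Icc 1 T,
        γ t * Real.sqrt (∏ l ∈ Finset.Icc (t + 1) T,
            2 * (1 - 2 * γ l * m + γ l ^ 2 * H ^ 2))
          * |aBar t - 1| * ‖g i (θ' t)‖ := by
  have hNpos : (0:ℝ) < N := by exact_mod_cast hN
  -- one-step bound
  have step : ∀ t ∈ Finset.Icc 1 T,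
      ‖θ (t+1) - θ' (t+1)‖ ≤
        Real.sqrt (2 * (1 - 2 * γ t * m + γ t ^ 2 * H ^ 2)) * ‖θ t - θ' t‖ +
        (γ t / N) * |aBar t - 1| * ‖g i (θ' t)‖ := by
    intro t ht
    have hγt : 0 ≤ γ t := hγ t ht
    have hr : 0 ≤ γ t / N := div_nonneg hγt hNpos.le
    have hdiff : θ (t+1) - θ' (t+1) =
        ((θ t - θ' t) - (γ t / N) • ∑ j, (g j (θ t) - g j (θ' t)))
          - ((γ t / N) * (1 - aBar t)) • g i (θ' t) := by
      have hsum : ∑ j, g j (θ' t)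
          = g i (θ' t) + ∑ j ∈ Finset.univ.erase i, g j (θ' t) :=
        (Finset.add_sum_erase _ _ (Finset.mem_univ i)).symm
      rw [hθ t ht, hθ' t ht, Finset.sum_sub_distrib, hsum]
      module
    have hinner : (N : ℝ) * (m * ‖θ t - θ' t‖^2)
        ≤ ⟪θ t - θ' t, ∑ j, (g j (θ t) - g j (θ' t))⟫ := by
      rw [inner_sum]
      calc (N : ℝ) * (m * ‖θ t - θ' t‖^2)
          = ∑ _j : Fin N, m * ‖θ t - θ' t‖^2 := by
            simp [Finset.sum_const, mul_assoc]
        _ ≤ ∑ j, ⟪θ t - θ' t, g j (θ t) - g j (θ' t)⟫ :=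
            Finset.sum_le_sum fun j _ => hconv j (θ t) (θ' t)
    have hSnorm : ‖∑ j, (g j (θ t) - g j (θ' t))‖ ≤ N * (H * ‖θ t - θ' t‖) := by
      calc ‖∑ j, (g j (θ t) - g j (θ' t))‖
          ≤ ∑ j, ‖g j (θ t) - g j (θ' t)‖ := norm_sum_le _ _
        _ ≤ ∑ _j : Fin N, H * ‖θ t - θ' t‖ :=
            Finset.sum_le_sum fun j _ => hsmooth j (θ t) (θ' t)
        _ = N * (H * ‖θ t - θ' t‖) := by simp
    have hw2 : ‖(θ t - θ' t) - (γ t / N) • ∑ j, (g j (θ t) - g j (θ' t))‖^2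
        ≤ (2 * (1 - 2 * γ t * m + γ t ^ 2 * H ^ 2)) * ‖θ t - θ' t‖^2 := by
      have hexp : ‖(θ t - θ' t) - (γ t / N) • ∑ j, (g j (θ t) - g j (θ' t))‖^2
          = ‖θ t - θ' t‖^2
            - 2 * ((γ t / N) * ⟪θ t - θ' t, ∑ j, (g j (θ t) - g j (θ' t))⟫)
            + (γ t / N)^2 * ‖∑ j, (g j (θ t) - g j (θ' t))‖^2 := by
        rw [norm_sub_sq_real, real_inner_smul_right, norm_smul,
          Real.norm_eq_abs, abs_of_nonneg hr, mul_pow]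
      rw [hexp]
      have hg : (γ t / N) * N = γ t := div_mul_cancel₀ _ hNpos.ne'
      have h1 : (γ t) * (m * ‖θ t - θ' t‖^2)
          ≤ (γ t / N) * ⟪θ t - θ' t, ∑ j, (g j (θ t) - g j (θ' t))⟫ := by
        have := mul_le_mul_of_nonneg_left hinner hr
        calc (γ t) * (m * ‖θ t - θ' t‖^2)
            = (γ t / N) * ((N : ℝ) * (m * ‖θ t - θ' t‖^2)) := by
              field_simp
          _ ≤ _ := this
      have hS2 : ‖∑ j, (g j (θ t) - g j (θ' t))‖^2
          ≤ (N * (H * ‖θ t - θ' t‖))^2 := by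
        have := mul_self_le_mul_self (norm_nonneg _) hSnorm
        nlinarith [this]
      have h2 : (γ t / N)^2 * ‖∑ j, (g j (θ t) - g j (θ' t))‖^2
          ≤ γ t ^ 2 * (H^2 * ‖θ t - θ' t‖^2) := by
        have h := mul_le_mul_of_nonneg_left hS2 (sq_nonneg (γ t / N))
        calc (γ t / N)^2 * ‖∑ j, (g j (θ t) - g j (θ' t))‖^2
            ≤ (γ t / N)^2 * (N * (H * ‖θ t - θ' t‖))^2 := h
          _ = ((γ t / N) * N)^2 * (H^2 * ‖θ t - θ' t‖^2) := by ring
          _ = γ t ^ 2 * (H^2 * ‖θ t - θ' t‖^2) := by rw [hg]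
      nlinarith [mul_nonneg (hc t ht) (sq_nonneg ‖θ t - θ' t‖), h1, h2]
    have hcnn : 0 ≤ 2 * (1 - 2 * γ t * m + γ t ^ 2 * H ^ 2) := hc t ht
    have hw : ‖(θ t - θ' t) - (γ t / N) • ∑ j, (g j (θ t) - g j (θ' t))‖
        ≤ Real.sqrt (2 * (1 - 2 * γ t * m + γ t ^ 2 * H ^ 2)) * ‖θ t - θ' t‖ := by
      have := Real.sqrt_le_sqrt hw2
      rwa [Real.sqrt_sq (norm_nonneg _), Real.sqrt_mul hcnn,
        Real.sqrt_sq (norm_nonneg _)] at this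
    calc ‖θ (t+1) - θ' (t+1)‖
        ≤ ‖(θ t - θ' t) - (γ t / N) • ∑ j, (g j (θ t) - g j (θ' t))‖
          + ‖((γ t / N) * (1 - aBar t)) • g i (θ' t)‖ := by
          rw [hdiff]; exact norm_sub_le _ _
      _ ≤ Real.sqrt (2 * (1 - 2 * γ t * m + γ t ^ 2 * H ^ 2)) * ‖θ t - θ' t‖
          + (γ t / N) * |aBar t - 1| * ‖g i (θ' t)‖ := by
          refine add_le_add hw (le_of_eq ?_)
          rw [norm_smul, Real.norm_eq_abs, abs_mul, abs_of_nonneg hr,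
            abs_sub_comm]
          try ring
  -- unrolled bound by induction
  have main : ∀ t, t ≤ T → ‖θ (t+1) - θ' (t+1)‖ ≤
      ∑ s ∈ Finset.Icc 1 t,
        (∏ l ∈ Finset.Icc (s+1) t,
            Real.sqrt (2 * (1 - 2 * γ l * m + γ l ^ 2 * H ^ 2)))
          * ((γ s / N) * |aBar s - 1| * ‖g i (θ' s)‖) := by
    intro t
    induction t with
    | zero =>
      intro _
      rw [hinit, sub_self, norm_zero]
      rw [show Finset.Icc 1 0 = (∅ : Finset ℕ) from rfl]
      simp
    | succ t ih =>
      intro hle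
      have htT : t ≤ T := Nat.le_of_succ_le hle
      have hmem : t + 1 ∈ Finset.Icc 1 T := by
        rw [Finset.mem_Icc]; omega
      have h1 := step (t+1) hmem
      have h2 := ih htT
      have hs2 : 0 ≤ Real.sqrt (2 * (1 - 2 * γ (t+1) * m + γ (t+1) ^ 2 * H ^ 2)) :=
        Real.sqrt_nonneg _
      calc ‖θ (t+1+1) - θ' (t+1+1)‖
          ≤ Real.sqrt (2 * (1 - 2 * γ (t+1) * m + γ (t+1) ^ 2 * H ^ 2))
              * ‖θ (t+1) - θ' (t+1)‖
            + (γ (t+1) / N) * |aBar (t+1) - 1| * ‖g i (θ' (t+1))‖ := h1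
        _ ≤ Real.sqrt (2 * (1 - 2 * γ (t+1) * m + γ (t+1) ^ 2 * H ^ 2))
              * (∑ s ∈ Finset.Icc 1 t,
                  (∏ l ∈ Finset.Icc (s+1) t,
                      Real.sqrt (2 * (1 - 2 * γ l * m + γ l ^ 2 * H ^ 2)))
                    * ((γ s / N) * |aBar s - 1| * ‖g i (θ' s)‖))
            + (γ (t+1) / N) * |aBar (t+1) - 1| * ‖g i (θ' (t+1))‖ :=
            add_le_add_left (mul_le_mul_of_nonneg_left h2 hs2) _
        _ = ∑ s ∈ Finset.Icc 1 (t+1),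
              (∏ l ∈ Finset.Icc (s+1) (t+1),
                  Real.sqrt (2 * (1 - 2 * γ l * m + γ l ^ 2 * H ^ 2)))
                * ((γ s / N) * |aBar s - 1| * ‖g i (θ' s)‖) := by
            rw [Finset.sum_Icc_succ_top (by omega : 1 ≤ t + 1), Finset.mul_sum]
            congr 1
            · refine Finset.sum_congr rfl fun s hs => ?_
              rw [Finset.mem_Icc] at hs
              rw [Finset.prod_Icc_succ_top (by omega : s + 1 ≤ t + 1)]
              ring
            · rw [Finset.Icc_eq_empty (by omega), Finset.prod_empty, one_mul]
  have hfin := main T le_rfl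
  have hstep2 : ∀ t ∈ Finset.Icc 1 T,
      L * ((∏ l ∈ Finset.Icc (t+1) T,
            Real.sqrt (2 * (1 - 2 * γ l * m + γ l ^ 2 * H ^ 2)))
          * ((γ t / N) * |aBar t - 1| * ‖g i (θ' t)‖))
      ≤ (Real.sqrt 2 * L / N) *
          (γ t * Real.sqrt (∏ l ∈ Finset.Icc (t + 1) T,
              2 * (1 - 2 * γ l * m + γ l ^ 2 * H ^ 2))
            * |aBar t - 1| * ‖g i (θ' t)‖) := by
    intro t ht
    rw [Finset.mem_Icc] at ht
    have hprod : Real.sqrt (∏ l ∈ Finset.Icc (t + 1) T,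
          2 * (1 - 2 * γ l * m + γ l ^ 2 * H ^ 2))
        = ∏ l ∈ Finset.Icc (t+1) T,
            Real.sqrt (2 * (1 - 2 * γ l * m + γ l ^ 2 * H ^ 2)) := by
      refine sqrt_prod_of_nonneg _ _ fun l hl => ?_
      rw [Finset.mem_Icc] at hl
      exact hc l (by rw [Finset.mem_Icc]; omega)
    rw [hprod]
    set B := ∏ l ∈ Finset.Icc (t+1) T,
        Real.sqrt (2 * (1 - 2 * γ l * m + γ l ^ 2 * H ^ 2)) with hBdef
    set a := |aBar t - 1| with hadef
    set n := ‖g i (θ' t)‖ with hndef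
    have hB : 0 ≤ B := Finset.prod_nonneg fun _ _ => Real.sqrt_nonneg _
    have ha : 0 ≤ a := abs_nonneg _
    have hn : 0 ≤ n := norm_nonneg _
    have hγt : 0 ≤ γ t := hγ t (by rw [Finset.mem_Icc]; omega)
    have h12 : (1 : ℝ) ≤ Real.sqrt 2 := by
      rw [show (1:ℝ) = Real.sqrt 1 by simp]
      exact Real.sqrt_le_sqrt (by norm_num)
    have hx : 0 ≤ L * B * γ t * a * n / N := by positivity
    calc L * (B * (γ t / N * a * n))
        = 1 * (L * B * γ t * a * n / N) := by ring
      _ ≤ Real.sqrt 2 * (L * B * γ t * a * n / N) :=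
          mul_le_mul_of_nonneg_right h12 hx
      _ = Real.sqrt 2 * L / N * (γ t * B * a * n) := by ring
  calc |R (θ (T + 1)) - R (θ' (T + 1))|
      ≤ L * ‖θ (T+1) - θ' (T+1)‖ := hR _ _
    _ ≤ L * ∑ s ∈ Finset.Icc 1 T,
          (∏ l ∈ Finset.Icc (s+1) T,
              Real.sqrt (2 * (1 - 2 * γ l * m + γ l ^ 2 * H ^ 2)))
            * ((γ s / N) * |aBar s - 1| * ‖g i (θ' s)‖) :=
        mul_le_mul_of_nonneg_left hfin hL
    _ ≤ _ := by
        rw [Finset.mul_sum, Finset.mul_sum]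
        exact Finset.sum_le_sum hstep2
end

section
/- Let E be a real inner product space, let N be a positive integer, γ, m, H ≥ 0, and let (Ω, μ) be a probability space. Let U : Ω → E, G : Ω → E, and D_1, …, D_N : Ω → E be square-integrable Bochner-measurable random vectors such that, μ-almost everywhere, ⟨U, D_j⟩ ≥ m‖U‖² and ‖D_j‖ ≤ H‖U‖ for every j. Let a, ā, b, b̄ be reals, let a_1, …, a_N be nonnegative reals with A = a_1 + ⋯ + a_N, and let ξ : Ω → E be square-integrable with ∫ ‖ξ‖² dμ = 1 and ∫ ⟨Y, ξ⟩ dμ = 0, where Y = (γ(ā − a)/N) G + U − (γ/N) ∑_{j=1}^N a_j D_j. Then ∫ ‖Y + (γ(b − b̄)/N) ξ‖² dμ ≤ 2(1 − 2γmA/N + γ²A²H²/N²) ∫ ‖U‖² dμ + (2γ²/N²)(a − ā)² ∫ ‖G‖² dμ + γ²(b − b̄)²/N². -/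
open MeasureTheory
open scoped RealInnerProductSpace BigOperators

lemma my_integrable_inner_L2 {E : Type*} [NormedAddCommGroup E] [InnerProductSpace ℝ E]
    {Ω : Type*} [MeasurableSpace Ω] {μ : Measure Ω} {f g : Ω → E}
    (hf : MemLp f 2 μ) (hg : MemLp g 2 μ) :
    Integrable (fun ω => ⟪f ω, g ω⟫) μ := by
  have h1 := (memLp_two_iff_integrable_sq_norm hf.1).1 hf
  have h2 := (memLp_two_iff_integrable_sq_norm hg.1).1 hg
  have h12 : Integrable (fun ω => (1/2) * (‖f ω‖ ^ 2 + ‖g ω‖ ^ 2)) μ :=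
    (h1.add h2).const_mul (1/2)
  refine h12.mono' (hf.1.inner hg.1) ?_
  filter_upwards with ω
  have h3 := abs_real_inner_le_norm (f ω) (g ω)
  simp only [Real.norm_eq_abs]
  nlinarith [sq_nonneg (‖f ω‖ - ‖g ω‖), abs_nonneg (⟪f ω, g ω⟫), norm_nonneg (f ω), norm_nonneg (g ω)]

set_option maxHeartbeats 1000000 in
/-- Claim A.1 (per-turn bound on trajectory difference) in full probabilistic
form: the expected squared difference of the two trajectories after one step,
including the injected noise, is bounded by the contraction term, the
gradient-scaling deviation term and the noise-scaling deviation term. -/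
theorem per_turn_trajectory_difference_full
    {E : Type*} [NormedAddCommGroup E] [InnerProductSpace ℝ E]
    {Ω : Type*} [MeasurableSpace Ω] (μ : Measure Ω) [IsProbabilityMeasure μ]
    (N : ℕ) (hN : 0 < N) (γ m H : ℝ) (hγ : 0 ≤ γ) (hm : 0 ≤ m) (hH : 0 ≤ H)
    (U G : Ω → E) (D : Fin N → Ω → E)
    (hU : MemLp U 2 μ) (hG : MemLp G 2 μ) (hD : ∀ j, MemLp (D j) 2 μ)
    (hconv : ∀ j, ∀ᵐ ω ∂μ, ⟪U ω, D j ω⟫ ≥ m * ‖U ω‖ ^ 2)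
    (hsmooth : ∀ j, ∀ᵐ ω ∂μ, ‖D j ω‖ ≤ H * ‖U ω‖)
    (a aBar b bBar : ℝ)
    (aj : Fin N → ℝ) (haj : ∀ j, 0 ≤ aj j)
    (A : ℝ) (hA : A = ∑ j, aj j)
    (ξ : Ω → E) (hξ : MemLp ξ 2 μ)
    (hξnorm : ∫ ω, ‖ξ ω‖ ^ 2 ∂μ = 1)
    (Y : Ω → E)
    (hY : Y = fun ω =>
      (γ * (aBar - a) / N) • G ω + U ω - (γ / N) • ∑ j, aj j • D j ω)
    (huncorr : ∫ ω, ⟪Y ω, ξ ω⟫ ∂μ = 0) :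
    ∫ ω, ‖Y ω + (γ * (b - bBar) / N) • ξ ω‖ ^ 2 ∂μ ≤
      2 * (1 - 2 * γ * m * A / N + γ ^ 2 * A ^ 2 * H ^ 2 / N ^ 2)
          * ∫ ω, ‖U ω‖ ^ 2 ∂μ
        + (2 * γ ^ 2 / N ^ 2) * (a - aBar) ^ 2 * ∫ ω, ‖G ω‖ ^ 2 ∂μ
        + γ ^ 2 * (b - bBar) ^ 2 / N ^ 2 := by
  have hNpos : (0:ℝ) < N := by exact_mod_cast hN
  set c : ℝ := γ * (b - bBar) / N with hc
  set c' : ℝ := γ * (aBar - a) / N with hc'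
  set K : ℝ := 1 - 2 * γ * m * A / N + γ ^ 2 * A ^ 2 * H ^ 2 / N ^ 2 with hK
  have hγN : (0:ℝ) ≤ γ / N := div_nonneg hγ hNpos.le
  -- Memℒp facts
  have hS : MemLp (fun ω => ∑ j, aj j • D j ω) 2 μ := by
    have h := memLp_finset_sum' (μ := μ) Finset.univ
      (fun (j : Fin N) _ => (hD j).const_smul (aj j))
    have he : (fun ω => ∑ j, aj j • D j ω) = ∑ j, fun ω => aj j • D j ω := by
      ext ω; simp
    rw [he]; exact h
  have hYm : MemLp Y 2 μ := by
    rw [hY]; exact ((hG.const_smul c').add hU).sub (hS.const_smul (γ / N))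
  have intY2 : Integrable (fun ω => ‖Y ω‖ ^ 2) μ :=
    (memLp_two_iff_integrable_sq_norm hYm.1).1 hYm
  have intU2 : Integrable (fun ω => ‖U ω‖ ^ 2) μ :=
    (memLp_two_iff_integrable_sq_norm hU.1).1 hU
  have intG2 : Integrable (fun ω => ‖G ω‖ ^ 2) μ :=
    (memLp_two_iff_integrable_sq_norm hG.1).1 hG
  have intξ2 : Integrable (fun ω => ‖ξ ω‖ ^ 2) μ :=
    (memLp_two_iff_integrable_sq_norm hξ.1).1 hξ
  have intYξ : Integrable (fun ω => ⟪Y ω, ξ ω⟫) μ := my_integrable_inner_L2 hYm hξ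
  -- Step 1: expand the noise term
  have key1 : ∫ ω, ‖Y ω + c • ξ ω‖ ^ 2 ∂μ = (∫ ω, ‖Y ω‖ ^ 2 ∂μ) + c ^ 2 := by
    have expand : ∀ ω, ‖Y ω + c • ξ ω‖ ^ 2
        = ‖Y ω‖ ^ 2 + (2 * c) * ⟪Y ω, ξ ω⟫ + c ^ 2 * ‖ξ ω‖ ^ 2 := by
      intro ω
      rw [@norm_add_sq_real, real_inner_smul_right, norm_smul, mul_pow,
        Real.norm_eq_abs, sq_abs]
      ring
    calc ∫ ω, ‖Y ω + c • ξ ω‖ ^ 2 ∂μ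
        = ∫ ω, (‖Y ω‖ ^ 2 + (2 * c) * ⟪Y ω, ξ ω⟫ + c ^ 2 * ‖ξ ω‖ ^ 2) ∂μ := by
          simp_rw [expand]
      _ = (∫ ω, ‖Y ω‖ ^ 2 ∂μ) + (2 * c) * (∫ ω, ⟪Y ω, ξ ω⟫ ∂μ)
            + c ^ 2 * (∫ ω, ‖ξ ω‖ ^ 2 ∂μ) := by
          have i1 : Integrable (fun ω => (2 * c) * ⟪Y ω, ξ ω⟫) μ := intYξ.const_mul (2 * c)
          have i2 : Integrable (fun ω => ‖Y ω‖ ^ 2 + (2 * c) * ⟪Y ω, ξ ω⟫) μ := intY2.add i1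
          have i3 : Integrable (fun ω => c ^ 2 * ‖ξ ω‖ ^ 2) μ := intξ2.const_mul (c ^ 2)
          rw [integral_add i2 i3, integral_add intY2 i1, integral_const_mul, integral_const_mul]
      _ = (∫ ω, ‖Y ω‖ ^ 2 ∂μ) + c ^ 2 := by rw [huncorr, hξnorm]; ring
  -- Step 2: pointwise a.e. bound on ‖Y‖²
  have hptwise : ∀ᵐ ω ∂μ, ‖Y ω‖ ^ 2 ≤ 2 * K * ‖U ω‖ ^ 2 + 2 * c' ^ 2 * ‖G ω‖ ^ 2 := by
    filter_upwards [ae_all_iff.2 hconv, ae_all_iff.2 hsmooth] with ω h1 h2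
    obtain ⟨S, hSdef⟩ : ∃ S : E, S = ∑ j, aj j • D j ω := ⟨_, rfl⟩
    obtain ⟨Z, hZ⟩ : ∃ Z : E, Z = U ω - (γ / N) • S := ⟨_, rfl⟩
    have hYω : Y ω = c' • G ω + Z := by rw [hY, hZ, hSdef]; simp [add_sub_assoc]
    have hinner : m * A * ‖U ω‖ ^ 2 ≤ ⟪U ω, S⟫ := by
      have hIS : ⟪U ω, S⟫ = ∑ j, aj j * ⟪U ω, D j ω⟫ := by
        simp [hSdef, inner_sum, real_inner_smul_right]
      rw [hIS, hA]
      have : ∑ j, aj j * (m * ‖U ω‖ ^ 2) ≤ ∑ j, aj j * ⟪U ω, D j ω⟫ :=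
        Finset.sum_le_sum fun j _ => mul_le_mul_of_nonneg_left (h1 j) (haj j)
      calc m * (∑ j, aj j) * ‖U ω‖ ^ 2 = ∑ j, aj j * (m * ‖U ω‖ ^ 2) := by
            rw [Finset.mul_sum, Finset.sum_mul]
            exact Finset.sum_congr rfl fun j _ => by ring
        _ ≤ _ := this
    have hnormS : ‖S‖ ≤ A * H * ‖U ω‖ := by
      rw [hSdef]
      calc ‖∑ j, aj j • D j ω‖ ≤ ∑ j, ‖aj j • D j ω‖ := norm_sum_le _ _
        _ = ∑ j, aj j * ‖D j ω‖ := Finset.sum_congr rfl fun j _ => by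
            rw [norm_smul, Real.norm_eq_abs, abs_of_nonneg (haj j)]
        _ ≤ ∑ j, aj j * (H * ‖U ω‖) :=
            Finset.sum_le_sum fun j _ => mul_le_mul_of_nonneg_left (h2 j) (haj j)
        _ = A * H * ‖U ω‖ := by
            rw [hA, Finset.sum_mul, Finset.sum_mul]
            exact Finset.sum_congr rfl fun j _ => by ring
    have hS2 : ‖S‖ ^ 2 ≤ (A * H * ‖U ω‖) ^ 2 :=
      pow_le_pow_left₀ (norm_nonneg S) hnormS 2
    have e : ‖Z‖ ^ 2 = ‖U ω‖ ^ 2 - 2 * ((γ / N) * ⟪U ω, S⟫) + (γ / N) ^ 2 * ‖S‖ ^ 2 := by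
      rw [hZ, @norm_sub_sq_real, real_inner_smul_right, norm_smul, mul_pow,
        Real.norm_eq_abs, sq_abs]
    have hZsq : ‖Z‖ ^ 2 ≤ K * ‖U ω‖ ^ 2 := by
      have t1 := mul_le_mul_of_nonneg_left hinner (by positivity : (0:ℝ) ≤ 2 * (γ / N))
      have t2 := mul_le_mul_of_nonneg_left hS2 (sq_nonneg (γ / N))
      have heq : K * ‖U ω‖ ^ 2
          = ‖U ω‖ ^ 2 - 2 * ((γ / N) * (m * A * ‖U ω‖ ^ 2))
            + (γ / N) ^ 2 * (A * H * ‖U ω‖) ^ 2 := by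
        rw [hK]; field_simp
      rw [e, heq]; linarith [t1, t2]
    have htri := norm_add_le (c' • G ω) Z
    have hcG : ‖c' • G ω‖ ^ 2 = c' ^ 2 * ‖G ω‖ ^ 2 := by
      rw [norm_smul, mul_pow, Real.norm_eq_abs, sq_abs]
    have hYb : ‖Y ω‖ ^ 2 ≤ 2 * ‖c' • G ω‖ ^ 2 + 2 * ‖Z‖ ^ 2 := by
      rw [hYω]
      nlinarith [htri, sq_nonneg (‖c' • G ω‖ - ‖Z‖), norm_nonneg (c' • G ω + Z)]
    rw [hcG] at hYb
    linarith
  -- Step 3: integrate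
  have step3 : ∫ ω, ‖Y ω‖ ^ 2 ∂μ
      ≤ 2 * K * (∫ ω, ‖U ω‖ ^ 2 ∂μ) + 2 * c' ^ 2 * (∫ ω, ‖G ω‖ ^ 2 ∂μ) := by
    calc ∫ ω, ‖Y ω‖ ^ 2 ∂μ
        ≤ ∫ ω, (2 * K * ‖U ω‖ ^ 2 + 2 * c' ^ 2 * ‖G ω‖ ^ 2) ∂μ :=
          by
            have j1 : Integrable (fun ω => 2 * K * ‖U ω‖ ^ 2) μ := intU2.const_mul (2 * K)
            have j2 : Integrable (fun ω => 2 * c' ^ 2 * ‖G ω‖ ^ 2) μ :=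
              intG2.const_mul (2 * c' ^ 2)
            exact integral_mono_ae intY2 (j1.add j2) hptwise
      _ = _ := by
          have j1 : Integrable (fun ω => 2 * K * ‖U ω‖ ^ 2) μ := intU2.const_mul (2 * K)
          have j2 : Integrable (fun ω => 2 * c' ^ 2 * ‖G ω‖ ^ 2) μ :=
            intG2.const_mul (2 * c' ^ 2)
          rw [integral_add j1 j2, integral_const_mul, integral_const_mul]
  -- conclude
  have hc2 : c ^ 2 = γ ^ 2 * (b - bBar) ^ 2 / (N:ℝ) ^ 2 := by
    rw [hc]; field_simp
  have hc'2 : 2 * c' ^ 2 = (2 * γ ^ 2 / (N:ℝ) ^ 2) * (a - aBar) ^ 2 := by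
    rw [hc']; field_simp; ring
  rw [key1]
  rw [hc'2] at step3
  linarith
end
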